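/- Let $V$ be a real Hilbert space, $a$ a bounded coercive symmetric bilinear form, and let $u_k, v_j$, bilinear forms $\tilde a_{jk}$ and $\tilde a^\epsilon_{jk}$ on normed spaces $\tilde V_k, \tilde V_j$ satisfy: coercivity $c_1 \sum_k \|u_k\|^2_{\tilde V_k} \leq \sum_{j,k} \tilde a_{jk}(u_k, u_j)$, the approximate equations $\sum_k \tilde a^\epsilon_{jk}(u^\epsilon_k, v_j) = f^\epsilon_j(v_j)$, the limit equations $\sum_k \tilde a_{jk}(u_k, v_j) = f_j(v_j)$, uniform convergence $|\tilde a_{jk}(u,v) - \tilde a^\epsilon_{jk}(u,v)| \leq \delta_\epsilon \|u\|_{\tilde V_k}\|v\|_{\tilde V_j}$ with $\delta_\epsilon \to 0$, convergence $f^\epsilon_j \to f_j$ in dual norm, and uniform boundedness of $\{u^\epsilon_k\}$. Then $\sum_k \|u_k - u^\epsilon_k\|^2_{\tilde V_k} \to 0$ as $\epsilon \to 0$. -/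
import Mathlib


/-- Multicontinuum convergence (paper's Theorem 3.1): under block coercivity of
the limit forms, uniform convergence of the approximate forms, convergence of
the right-hand sides, and uniform boundedness of the approximate solutions, the
approximate multicontinuum solutions converge: `∑ₖ ‖uₖ - uₖᵋ‖² → 0`. -/
theorem stmt_15 {m : ℕ} (Vk : Fin m → Type*)
    [∀ k, NormedAddCommGroup (Vk k)] [∀ k, InnerProductSpace ℝ (Vk k)]
    [∀ k, CompleteSpace (Vk k)]
    (ta : ∀ j k : Fin m, Vk k →ₗ[ℝ] Vk j →ₗ[ℝ] ℝ)
    (taε : ℕ → ∀ j k : Fin m, Vk k →ₗ[ℝ] Vk j →ₗ[ℝ] ℝ)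
    (c₁ C₁ : ℝ) (hc₁ : 0 < c₁)
    (hcoer : ∀ u : ∀ k, Vk k, c₁ * ∑ k, ‖u k‖ ^ 2 ≤ ∑ j, ∑ k, ta j k (u k) (u j))
    (hbdd : ∀ (j k : Fin m) (u : Vk k) (v : Vk j), |ta j k u v| ≤ C₁ * ‖u‖ * ‖v‖)
    (δ : ℕ → ℝ) (hδ : Filter.Tendsto δ Filter.atTop (nhds 0))
    (hconv : ∀ (n : ℕ) (j k : Fin m) (u : Vk k) (v : Vk j),
      |ta j k u v - taε n j k u v| ≤ δ n * ‖u‖ * ‖v‖)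
    (f : ∀ j, Vk j →L[ℝ] ℝ) (fε : ℕ → ∀ j, Vk j →L[ℝ] ℝ)
    (hf : ∀ j, Filter.Tendsto (fun n => ‖fε n j - f j‖) Filter.atTop (nhds 0))
    (u : ∀ k, Vk k) (uε : ℕ → ∀ k, Vk k)
    (hueq : ∀ (j : Fin m) (v : Vk j), ∑ k, ta j k (u k) v = f j v)
    (huεeq : ∀ (n : ℕ) (j : Fin m) (v : Vk j), ∑ k, taε n j k (uε n k) v = fε n j v)
    (hbound : ∃ M : ℝ, ∀ (n : ℕ) (k : Fin m), ‖uε n k‖ ≤ M) :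
    Filter.Tendsto (fun n => ∑ k, ‖u k - uε n k‖ ^ 2) Filter.atTop (nhds 0) := by
  obtain ⟨M, hM⟩ := hbound
  set M' : ℝ := max M 0 with hM'def
  have hM'0 : 0 ≤ M' := le_max_right _ _
  have hMb : ∀ n k, ‖uε n k‖ ≤ M' := fun n k => (hM n k).trans (le_max_left _ _)
  set S : ℕ → ℝ := fun n => ∑ k, ‖u k - uε n k‖ ^ 2 with hSdef
  have hS0 : ∀ n, 0 ≤ S n := fun n => Finset.sum_nonneg fun k _ => sq_nonneg _
  set B : ℕ → ℝ := fun n => (∑ j, ‖fε n j - f j‖) + (m : ℝ) * (m : ℝ) * |δ n| * M'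
    with hBdef
  have hB0 : ∀ n, 0 ≤ B n := by
    intro n
    have : (0:ℝ) ≤ ∑ j, ‖fε n j - f j‖ := Finset.sum_nonneg fun j _ => norm_nonneg _
    positivity
  have key : ∀ n, c₁ * S n ≤ B n * Real.sqrt (S n) := by
    intro n
    set e : ∀ k, Vk k := fun k => u k - uε n k with he
    have hej : ∀ j, ‖e j‖ ≤ Real.sqrt (S n) := by
      intro j
      have h1 : ‖e j‖ ^ 2 ≤ S n :=
        Finset.single_le_sum (f := fun k => ‖u k - uε n k‖ ^ 2)
          (fun k _ => sq_nonneg _) (Finset.mem_univ j)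
      calc ‖e j‖ = Real.sqrt (‖e j‖ ^ 2) := (Real.sqrt_sq (norm_nonneg _)).symm
        _ ≤ Real.sqrt (S n) := Real.sqrt_le_sqrt h1
    have h1 : c₁ * S n ≤ ∑ j, ∑ k, ta j k (e k) (e j) := hcoer e
    have h2 : ∀ j, ∑ k, ta j k (e k) (e j)
        = (f j (e j) - fε n j (e j))
          - ∑ k, (ta j k (uε n k) (e j) - taε n j k (uε n k) (e j)) := by
      intro j
      have hsplit : ∑ k, ta j k (e k) (e j)
          = ∑ k, ta j k (u k) (e j) - ∑ k, ta j k (uε n k) (e j) := by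
        rw [← Finset.sum_sub_distrib]
        refine Finset.sum_congr rfl fun k _ => ?_
        simp [he, map_sub, LinearMap.sub_apply]
        ring
      rw [hsplit, hueq j (e j), Finset.sum_sub_distrib, huεeq n j (e j)]
      ring
    have hterm : ∀ j : Fin m, ∑ k, ta j k (e k) (e j)
        ≤ ‖fε n j - f j‖ * Real.sqrt (S n)
          + (m : ℝ) * (|δ n| * M' * Real.sqrt (S n)) := by
      intro j
      rw [h2 j]
      have hfj : f j (e j) - fε n j (e j) ≤ ‖fε n j - f j‖ * Real.sqrt (S n) := by
        have : f j (e j) - fε n j (e j) = -((fε n j - f j) (e j)) := by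
          simp only [ContinuousLinearMap.sub_apply, ContinuousLinearMap.coe_sub']
          ring
        rw [this]
        calc -((fε n j - f j) (e j)) ≤ |((fε n j - f j) (e j))| := neg_le_abs _
          _ ≤ ‖fε n j - f j‖ * ‖e j‖ := by
              simpa using (fε n j - f j).le_opNorm (e j)
          _ ≤ ‖fε n j - f j‖ * Real.sqrt (S n) := by
              exact mul_le_mul_of_nonneg_left (hej j) (norm_nonneg _)
      have hδj : -(∑ k, (ta j k (uε n k) (e j) - taε n j k (uε n k) (e j)))
          ≤ (m : ℝ) * (|δ n| * M' * Real.sqrt (S n)) := by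
        have hk : ∀ k : Fin m,
            -(ta j k (uε n k) (e j) - taε n j k (uε n k) (e j))
              ≤ |δ n| * M' * Real.sqrt (S n) := by
          intro k
          calc -(ta j k (uε n k) (e j) - taε n j k (uε n k) (e j))
              ≤ |ta j k (uε n k) (e j) - taε n j k (uε n k) (e j)| := neg_le_abs _
            _ ≤ δ n * ‖uε n k‖ * ‖e j‖ := hconv n j k _ _
            _ ≤ |δ n| * M' * Real.sqrt (S n) := by
                have h1 : δ n * ‖uε n k‖ * ‖e j‖ ≤ |δ n| * ‖uε n k‖ * ‖e j‖ :=
                  mul_le_mul_of_nonneg_right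
                    (mul_le_mul_of_nonneg_right (le_abs_self _) (norm_nonneg _))
                    (norm_nonneg _)
                have h2 : |δ n| * ‖uε n k‖ * ‖e j‖ ≤ |δ n| * M' * Real.sqrt (S n) :=
                  mul_le_mul
                    (mul_le_mul_of_nonneg_left (hMb n k) (abs_nonneg _))
                    (hej j) (norm_nonneg _) (by positivity)
                linarith
        calc -(∑ k, (ta j k (uε n k) (e j) - taε n j k (uε n k) (e j)))
            = ∑ k, -(ta j k (uε n k) (e j) - taε n j k (uε n k) (e j)) := by
              rw [Finset.sum_neg_distrib]
          _ ≤ ∑ k : Fin m, |δ n| * M' * Real.sqrt (S n) :=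
              Finset.sum_le_sum fun k _ => hk k
          _ = (m : ℝ) * (|δ n| * M' * Real.sqrt (S n)) := by
              simp [Finset.sum_const, mul_comm]
      linarith
    calc c₁ * S n ≤ ∑ j, ∑ k, ta j k (e k) (e j) := h1
      _ ≤ ∑ j, (‖fε n j - f j‖ * Real.sqrt (S n)
            + (m : ℝ) * (|δ n| * M' * Real.sqrt (S n))) :=
          Finset.sum_le_sum fun j _ => hterm j
      _ = B n * Real.sqrt (S n) := by
          rw [Finset.sum_add_distrib, ← Finset.sum_mul, Finset.sum_const]
          simp [hBdef]
          ring
  have hSle : ∀ n, S n ≤ (B n / c₁) ^ 2 := by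
    intro n
    have hs0 := Real.sqrt_nonneg (S n)
    have hsq : Real.sqrt (S n) ^ 2 = S n := Real.sq_sqrt (hS0 n)
    have hk := key n
    have hb := hB0 n
    rw [div_pow]
    rw [le_div_iff₀ (by positivity)]
    nlinarith [sq_nonneg (c₁ * Real.sqrt (S n) - B n)]
  have hBto : Filter.Tendsto B Filter.atTop (nhds 0) := by
    have h1 : Filter.Tendsto (fun n => ∑ j, ‖fε n j - f j‖) Filter.atTop (nhds 0) := by
      have := tendsto_finset_sum (Finset.univ : Finset (Fin m))
        (fun j _ => hf j)
      simpa using this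
    have h2 : Filter.Tendsto (fun n => (m : ℝ) * (m : ℝ) * |δ n| * M')
        Filter.atTop (nhds 0) := by
      have habs : Filter.Tendsto (fun n => |δ n|) Filter.atTop (nhds 0) := by
        have := hδ.abs
        simpa using this
      have := (habs.const_mul ((m : ℝ) * (m : ℝ))).mul_const M'
      simpa [mul_assoc] using this
    simpa using h1.add h2
  have hlim : Filter.Tendsto (fun n => (B n / c₁) ^ 2) Filter.atTop (nhds 0) := by
    have := (hBto.div_const c₁).pow 2
    simpa using this
  exact squeeze_zero hS0 hSle hlim
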